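/- Let G be a cyclic graph, let v and u be vertices of G, and let m be a nonnegative integer. Then |γ_m(v) − γ_m(u)| < 1. -/

import Mathlib

open Filter Topology Metric

noncomputable section

/-! ### The circle of unit circumference, clockwise distance and cyclic order -/

/-- The circle `S¹` of unit circumference, `ℝ/ℤ`. -/
abbrev Circ : Type := AddCircle (1 : ℝ)

instance : Fact ((0:ℝ) < 1) := ⟨one_pos⟩

/-- The clockwise distance from `u` to `v`: the representative of `v - u` in `[0,1)`. -/
def darc (u v : Circ) : ℝ := ((AddCircle.equivIco 1 0) (v - u) : ℝ)

/-- `csbtw u v w`: the three points are distinct and `v` lies strictly inside the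
clockwise arc from `u` to `w`; that is, `u ≺ v ≺ w ≺ u`. -/
def csbtw (u v w : Circ) : Prop := u ≠ v ∧ v ≠ w ∧ w ≠ u ∧ darc u v < darc u w

/-- `cwbtw u v w`: the weak clockwise cyclic order `u ⪯ v ⪯ w ⪯ u`. -/
def cwbtw (u v w : Circ) : Prop := darc u v ≤ darc u w

/-! ### Cyclic graphs, winding fractions, clique complexes -/

/-- A (possibly infinite) cyclic graph: a directed graph whose vertices lie on the
circle `S¹` of unit circumference, with no self-loops and no doubly oriented edges,
such that whenever `v → u` is an edge and `v ≺ w ≺ u ≺ v` for a vertex `w`,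
also `v → w` and `w → u` are edges. -/
structure CyclicGraph where
  V : Set Circ
  Adj : Circ → Circ → Prop
  mem_of_adj : ∀ {v w}, Adj v w → v ∈ V ∧ w ∈ V
  loopless : ∀ v, ¬ Adj v v
  one_way : ∀ {v w}, Adj v w → ¬ Adj w v
  cyclic : ∀ {v u w}, Adj v u → w ∈ V → csbtw v w u → Adj v w ∧ Adj w u

/-- The induced subgraph of a cyclic graph on a vertex subset `W`. -/
def CyclicGraph.induce (G : CyclicGraph) (W : Set Circ) : CyclicGraph where
  V := G.V ∩ W
  Adj v w := G.Adj v w ∧ v ∈ W ∧ w ∈ W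
  mem_of_adj h := ⟨⟨(G.mem_of_adj h.1).1, h.2.1⟩, (G.mem_of_adj h.1).2, h.2.2⟩
  loopless v h := G.loopless v h.1
  one_way h h' := G.one_way h.1 h'.1
  cyclic h hw hb := ⟨⟨(G.cyclic h.1 hw.1 hb).1, h.2.1, hw.2⟩,
    (G.cyclic h.1 hw.1 hb).2, hw.2, h.2.2⟩

/-- `IsPathFrom G m v p`: `p` describes a directed path `v = p 0 → p 1 → ⋯ → p m` in `G`. -/
def IsPathFrom (G : CyclicGraph) (m : ℕ) (v : Circ) (p : ℕ → Circ) : Prop :=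
  p 0 = v ∧ ∀ i < m, G.Adj (p i) (p (i+1))

/-- The set of total clockwise lengths `Σ d⃗(v_i, v_{i+1})` of directed paths of `m`
edges starting at `v`. -/
def gammaSet (G : CyclicGraph) (m : ℕ) (v : Circ) : Set ℝ :=
  {s | ∃ p : ℕ → Circ, IsPathFrom G m v p ∧ s = ∑ i ∈ Finset.range m, darc (p i) (p (i+1))}

/-- `γ_m(v)`: the supremum of total clockwise lengths of directed paths of `m` edges
starting at `v`. -/
def gamma (G : CyclicGraph) (m : ℕ) (v : Circ) : ℝ := sSup (gammaSet G m v)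

/-- `f_m(v) = (v + γ_m(v)) mod 1`. -/
def fm (G : CyclicGraph) (m : ℕ) (v : Circ) : Circ := v + ((gamma G m v : ℝ) : Circ)

/-- The vertex of `C_n^k` indexed by `i : ZMod n`: the point `i/n` of the circle. -/
def cpt (n : ℕ) (i : ZMod n) : Circ := (((i.val : ℝ) / (n : ℝ) : ℝ) : Circ)

/-- A cyclic homomorphism from the regular cyclic graph `C_n^k` to `G`: a homomorphism
of directed graphs which weakly preserves the clockwise cyclic order and is
non-constant whenever `k ≥ 1` (i.e. whenever `C_n^k` has a directed cycle). -/
def IsCyclicHomC (G : CyclicGraph) (n k : ℕ) (g : ZMod n → Circ) : Prop :=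
  (∀ i, g i ∈ G.V) ∧
  (∀ (i : ZMod n) (s : ℕ), 1 ≤ s → s ≤ k →
    (g i = g (i + (s : ZMod n)) ∨ G.Adj (g i) (g (i + (s : ZMod n))))) ∧
  (∀ i j l : ZMod n, csbtw (cpt n i) (cpt n j) (cpt n l) → cwbtw (g i) (g j) (g l)) ∧
  (1 ≤ k → ∃ i j, g i ≠ g j)

/-- The winding fraction of a finite cyclic graph:
`sup { k/n : there exists a cyclic homomorphism C_n^k → G }`. -/
def wfAux (G : CyclicGraph) : ℝ :=
  sSup {x : ℝ | ∃ n k : ℕ, 0 < n ∧ 2 * k < n ∧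
    (∃ g : ZMod n → Circ, IsCyclicHomC G n k g) ∧ x = (k : ℝ) / (n : ℝ)}

/-- The winding fraction of an arbitrary cyclic graph: the supremum of the winding
fractions of its finite induced subgraphs. -/
def wf (G : CyclicGraph) : ℝ :=
  sSup {x : ℝ | ∃ W : Finset Circ, ↑W ⊆ G.V ∧ x = wfAux (G.induce ↑W)}

/-- The supremum defining `wf G` is attained by some finite induced subgraph. -/
def SupAttained (G : CyclicGraph) : Prop :=
  ∃ W : Finset Circ, ↑W ⊆ G.V ∧ wfAux (G.induce ↑W) = wf G

/-- A generic cyclic graph: either `l/(2l+1) < wf G < (l+1)/(2l+3)` for some `l ∈ ℕ`,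
or `wf G = (l+1)/(2l+3)` and the supremum defining the winding fraction is not
attained. -/
def Generic (G : CyclicGraph) : Prop :=
  (∃ l : ℕ, (l : ℝ) / (2 * l + 1) < wf G ∧ wf G < ((l : ℝ) + 1) / (2 * l + 3)) ∨
  (∃ l : ℕ, wf G = ((l : ℝ) + 1) / (2 * l + 3) ∧ ¬ SupAttained G)

/-- The clique complex of (the underlying undirected graph of) a cyclic graph. -/
def cliqueCx (G : CyclicGraph) : Set (Finset Circ) :=
  {σ | σ.Nonempty ∧ ↑σ ⊆ G.V ∧ ∀ v ∈ σ, ∀ w ∈ σ, v ≠ w → (G.Adj v w ∨ G.Adj w v)}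

/-! The proof compares cumulative clockwise positions. Follow a path `p` from `v` and a
path `q` from `u`, both measured from `v`, so that `q` starts `d⃗(v,u) < 1` ahead. As long
as `q` stays weakly ahead of `p` we move on along both; the first time `p` would overtake
`q`, the current vertex of `q` lies on the arc spanned by the current edge of `p`, so by
cyclicity it has an edge to the head of that edge, and we switch to `p` there. Hence every
path from `v` is matched, up to `d⃗(v,u)`, by one from `u`, so `γ_m(v) ≤ γ_m(u) + d⃗(v,u)`. -/

lemma darc_nonneg (u v : Circ) : 0 ≤ darc u v :=
  ((AddCircle.equivIco 1 0) (v - u)).2.1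

lemma darc_lt_one (u v : Circ) : darc u v < 1 :=
  ((AddCircle.equivIco 1 0) (v - u)).2.2.trans_eq (zero_add 1)

lemma darc_eq_fract {u v : Circ} {x : ℝ} (h : (x : Circ) = v - u) :
    darc u v = Int.fract x := by
  rw [darc, ← h, AddCircle.coe_equivIco_mk_apply, div_one, mul_one]

lemma darc_eq_of_coe_eq {u v : Circ} {x : ℝ} (hx₀ : 0 ≤ x) (hx₁ : x < 1)
    (h : (x : Circ) = v - u) : darc u v = x := by
  rw [darc_eq_fract h, Int.fract_eq_self]
  exact ⟨hx₀, hx₁⟩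

lemma darc_le_of_coe_eq {u v : Circ} {x : ℝ} (hx₀ : 0 ≤ x) (h : (x : Circ) = v - u) :
    darc u v ≤ x := by
  rw [darc_eq_fract h, Int.fract, sub_le_self_iff]
  exact_mod_cast Int.floor_nonneg.mpr hx₀

lemma coe_darc (u v : Circ) : (darc u v : Circ) = v - u :=
  AddCircle.coe_equivIco

lemma CyclicGraph.adj_of_darc_lt (G : CyclicGraph) {v u w : Circ} (hvw : G.Adj v w)
    (hu : u ∈ G.V) (hlt : darc v u < darc v w) : G.Adj u w := by
  by_cases huv : v = u
  · exact huv ▸ hvw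
  refine (G.cyclic hvw hu ⟨huv, ?_, ?_, hlt⟩).2
  · rintro rfl
    exact hlt.false
  · rintro rfl
    exact G.loopless _ hvw

lemma zero_mem_gammaSet (G : CyclicGraph) (v : Circ) : (0 : ℝ) ∈ gammaSet G 0 v :=
  ⟨fun _ => v, ⟨rfl, fun _ h => absurd h (Nat.not_lt_zero _)⟩, by simp⟩

lemma eq_zero_of_mem_gammaSet_zero {G : CyclicGraph} {v : Circ} {s : ℝ}
    (hs : s ∈ gammaSet G 0 v) : s = 0 := by
  obtain ⟨_, _, rfl⟩ := hs
  simp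

lemma mem_gammaSet_succ {G : CyclicGraph} {m : ℕ} {v : Circ} {s : ℝ} :
    s ∈ gammaSet G (m + 1) v ↔ ∃ w, G.Adj v w ∧ ∃ t ∈ gammaSet G m w, s = darc v w + t := by
  constructor
  · rintro ⟨p, ⟨rfl, hp⟩, rfl⟩
    refine ⟨p 1, hp 0 m.succ_pos, _, ⟨fun i => p (i + 1), ⟨rfl, fun i hi => hp _ (by omega)⟩,
      rfl⟩, ?_⟩
    rw [Finset.sum_range_succ', add_comm]
  · rintro ⟨w, hvw, t, ⟨p, ⟨rfl, hp⟩, rfl⟩, rfl⟩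
    let q : ℕ → Circ := fun i => Nat.casesOn i v p
    refine ⟨q, ⟨rfl, fun i hi => ?_⟩, ?_⟩
    · cases i with
      | zero => exact hvw
      | succ i => exact hp i (by omega)
    · rw [Finset.sum_range_succ', add_comm]
      rfl

lemma gammaSet_bddAbove (G : CyclicGraph) (m : ℕ) (v : Circ) : BddAbove (gammaSet G m v) := by
  refine ⟨m, ?_⟩
  rintro _ ⟨p, -, rfl⟩
  calc ∑ i ∈ Finset.range m, darc (p i) (p (i + 1)) ≤ ∑ _i ∈ Finset.range m, (1 : ℝ) :=
        Finset.sum_le_sum fun i _ => (darc_lt_one _ _).le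
    _ = m := by simp

lemma exists_mem_gammaSet_sub_darc_le {G : CyclicGraph} {m : ℕ} {v u : Circ} {L : ℝ}
    (hL : L ∈ gammaSet G m v) (hu : (gammaSet G m u).Nonempty) :
    ∃ s ∈ gammaSet G m u, L - darc v u ≤ s := by
  induction m generalizing v u L with
  | zero =>
    refine ⟨0, zero_mem_gammaSet G u, ?_⟩
    rw [eq_zero_of_mem_gammaSet_zero hL]
    linarith [darc_nonneg v u]
  | succ m ih =>
    obtain ⟨w, hvw, t, ht, rfl⟩ := mem_gammaSet_succ.mp hL
    obtain ⟨_, hs⟩ := hu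
    obtain ⟨x, hux, t', ht', -⟩ := mem_gammaSet_succ.mp hs
    rcases le_or_gt (darc v w) (darc v u + darc u x) with hahead | hbehind
    · obtain ⟨s, hs, hts⟩ := ih ht ⟨t', ht'⟩
      have hwx : darc w x ≤ darc v u + darc u x - darc v w := by
        refine darc_le_of_coe_eq (by linarith) ?_
        simp only [AddCircle.coe_add, AddCircle.coe_sub, coe_darc]
        abel
      exact ⟨_, mem_gammaSet_succ.mpr ⟨x, hux, s, hs, rfl⟩, by linarith⟩
    · have hvu : darc v u < darc v w := by linarith [darc_nonneg u x]
      have huw : darc u w = darc v w - darc v u := by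
        refine darc_eq_of_coe_eq (by linarith) (by linarith [darc_lt_one v w, darc_nonneg v u]) ?_
        simp only [AddCircle.coe_sub, coe_darc]
        abel
      have huV : u ∈ G.V := (G.mem_of_adj hux).1
      refine ⟨_, mem_gammaSet_succ.mpr ⟨w, G.adj_of_darc_lt hvw huV hvu, t, ht, rfl⟩, ?_⟩
      linarith

lemma gamma_le_gamma_add_darc {G : CyclicGraph} {m : ℕ} {v u : Circ}
    (hv : (gammaSet G m v).Nonempty) (hu : (gammaSet G m u).Nonempty) :
    gamma G m v ≤ gamma G m u + darc v u := by
  refine csSup_le hv fun L hL => ?_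
  obtain ⟨s, hs, hLs⟩ := exists_mem_gammaSet_sub_darc_le hL hu
  have := le_csSup (gammaSet_bddAbove G m u) hs
  rw [gamma]
  linarith

theorem cyclicGraph_gamma_discrepancy_general (G : CyclicGraph) (v u : Circ) (m : ℕ)
    (hvne : (gammaSet G m v).Nonempty) (hune : (gammaSet G m u).Nonempty) :
    |gamma G m v - gamma G m u| < 1 := by
  rw [abs_sub_lt_iff]
  constructor
  · linarith [gamma_le_gamma_add_darc hvne hune, darc_lt_one v u]
  · linarith [gamma_le_gamma_add_darc hune hvne, darc_lt_one u v]

/-- **Discrepancy of path lengths** (Adamaszek–Adams–Reddy, Lemma 5.5). In a cyclic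
graph, for any two vertices `v, u` and any `m ∈ ℕ` (such that directed paths of `m`
edges exist from `v` and from `u`, so that `γ_m` is defined there),
`|γ_m(v) − γ_m(u)| < 1`. -/
theorem cyclicGraph_gamma_discrepancy (G : CyclicGraph) (v u : Circ)
    (hv : v ∈ G.V) (hu : u ∈ G.V) (m : ℕ)
    (hvne : (gammaSet G m v).Nonempty) (hune : (gammaSet G m u).Nonempty) :
    |gamma G m v - gamma G m u| < 1 :=
  cyclicGraph_gamma_discrepancy_general G v u m hvne hune

end
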